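/- Define f₂(τ) = -τ/24 - (1/π)·Σ_{n=0}^∞ log(1 - e^{-π(2n+1)τ}) for τ > 0. Then f₂ is strictly decreasing, f₂(τ) → +∞ as τ → 0⁺, and f₂(τ) → -∞ as τ → +∞; in particular there exists a unique τ₀ > 0 with f₂(τ₀) = 0. -/

import Mathlib

/-- f₂(τ) = -τ/24 - (1/π) Σ_{n=0}^∞ log(1 - e^{-π(2n+1)τ}). -/
noncomputable def fTwo (τ : ℝ) : ℝ :=
  -τ / 24 - (1 / Real.pi) * ∑' n : ℕ, Real.log (1 - Real.exp (-Real.pi * (2 * (n : ℝ) + 1) * τ))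

open Real Filter Set Topology

/-!
Each summand `log (1 - e^{-π(2n+1)τ})` is negative and nondecreasing in `τ`, so the series is
nondecreasing and the term `-τ/24` makes `f₂` strictly decreasing. Keeping only the first summand
bounds `f₂ τ` below by `-τ/24 - log (1 - e^{-πτ}) / π`, which tends to `+∞` as `τ → 0⁺`; monotonicity
of the series bounds `f₂ τ` above by `-τ/24 + f₂(1) + 1/24` for `τ ≥ 1`. On `[ε, ∞)` the series is
dominated by its value at `ε`, hence converges uniformly, so `f₂` is continuous and the intermediate
value theorem produces the zero.
-/

theorem StrictAntiOn.existsUnique_eq_of_tendsto {f : ℝ → ℝ} {a : ℝ} (c : ℝ)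
    (hf : StrictAntiOn f (Ioi a)) (hcont : ContinuousOn f (Ioi a))
    (hleft : Tendsto f (𝓝[>] a) atTop) (hright : Tendsto f atTop atBot) :
    ∃! x, a < x ∧ f x = c := by
  obtain ⟨x, hfx, hx⟩ := ((hleft.eventually_gt_atTop c).and self_mem_nhdsWithin).exists
  obtain ⟨y, hfy, hxy⟩ := ((hright.eventually_lt_atBot c).and (eventually_gt_atTop x)).exists
  obtain ⟨z, hz, hfz⟩ := intermediate_value_Icc' hxy.le
    (hcont.mono (Icc_subset_Ioi_iff hxy.le |>.2 hx)) ⟨hfy.le, hfx.le⟩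
  have hza : a < z := hx.trans_le hz.1
  exact ⟨z, ⟨hza, hfz⟩, fun w hw => hf.injOn hw.1 hza (hw.2.trans hfz.symm)⟩

section LogOneSubExp

variable {c : ℝ}

lemma log_one_sub_exp_mul_neg (hc : c < 0) {τ : ℝ} (hτ : 0 < τ) : log (1 - exp (c * τ)) < 0 := by
  have hlt : exp (c * τ) < 1 := exp_lt_one_iff.2 (mul_neg_of_neg_of_pos hc hτ)
  exact log_neg (by linarith) (by linarith [exp_pos (c * τ)])

lemma monotoneOn_log_one_sub_exp_mul (hc : c < 0) :
    MonotoneOn (fun τ => log (1 - exp (c * τ))) (Ioi 0) := by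
  intro a ha b _ hab
  have hexp : exp (c * b) ≤ exp (c * a) := exp_le_exp.2 (mul_le_mul_of_nonpos_left hab hc.le)
  have hpos : 0 < 1 - exp (c * a) := sub_pos.2 (exp_lt_one_iff.2 (mul_neg_of_neg_of_pos hc ha))
  exact log_le_log hpos (by linarith)

lemma continuousOn_log_one_sub_exp_mul (hc : c < 0) :
    ContinuousOn (fun τ => log (1 - exp (c * τ))) (Ioi 0) := by
  refine ContinuousOn.log (by fun_prop) fun τ hτ => ?_
  exact (sub_pos.2 (exp_lt_one_iff.2 (mul_neg_of_neg_of_pos hc hτ))).ne'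

end LogOneSubExp

noncomputable def fTwoSeries (τ : ℝ) : ℝ :=
  ∑' n : ℕ, log (1 - exp (-π * (2 * (n : ℝ) + 1) * τ))

lemma fTwo_eq_sub_fTwoSeries (τ : ℝ) : fTwo τ = -τ / 24 - (1 / π) * fTwoSeries τ := rfl

lemma neg_pi_mul_two_mul_add_one_neg (n : ℕ) : -π * (2 * (n : ℝ) + 1) < 0 :=
  mul_neg_of_neg_of_pos (neg_neg_of_pos pi_pos) (by positivity)

lemma summable_log_one_sub_exp_neg_pi_mul_odd {τ : ℝ} (hτ : 0 < τ) :
    Summable fun n : ℕ => log (1 - exp (-π * (2 * (n : ℝ) + 1) * τ)) := by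
  have hexp : Summable fun n : ℕ => exp (-π * (2 * (n : ℝ) + 1) * τ) := by
    have := summable_exp_nat_mul_of_ge (c := -π * τ) (by nlinarith [pi_pos])
      (f := fun n : ℕ => 2 * (n : ℝ) + 1) (fun n => by linarith [(n.cast_nonneg : (0 : ℝ) ≤ n)])
    simpa only [mul_right_comm] using this
  simpa only [← sub_eq_add_neg] using Real.summable_log_one_add_of_summable hexp.neg

lemma monotoneOn_fTwoSeries : MonotoneOn fTwoSeries (Ioi 0) := fun _ ha _ hb hab =>
  Summable.tsum_le_tsum
    (fun n => monotoneOn_log_one_sub_exp_mul (neg_pi_mul_two_mul_add_one_neg n) ha hb hab)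
    (summable_log_one_sub_exp_neg_pi_mul_odd ha) (summable_log_one_sub_exp_neg_pi_mul_odd hb)

lemma fTwoSeries_le_log {τ : ℝ} (hτ : 0 < τ) : fTwoSeries τ ≤ log (1 - exp (-π * τ)) := by
  rw [fTwoSeries, (summable_log_one_sub_exp_neg_pi_mul_odd hτ).tsum_eq_zero_add]
  have htail : ∑' n : ℕ, log (1 - exp (-π * (2 * ((n + 1 : ℕ) : ℝ) + 1) * τ)) ≤ 0 :=
    tsum_nonpos fun n => (log_one_sub_exp_mul_neg (neg_pi_mul_two_mul_add_one_neg _) hτ).le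
  simpa using htail

lemma continuousOn_fTwoSeries : ContinuousOn fTwoSeries (Ioi 0) := by
  have hloc : ∀ ε > 0, ContinuousOn fTwoSeries (Ici ε) := fun ε hε => by
    refine continuousOn_tsum (u := fun n : ℕ => ‖log (1 - exp (-π * (2 * (n : ℝ) + 1) * ε))‖)
      (fun n => (continuousOn_log_one_sub_exp_mul (neg_pi_mul_two_mul_add_one_neg n)).mono
        (Ici_subset_Ioi.2 hε)) (summable_log_one_sub_exp_neg_pi_mul_odd hε).norm fun n t ht => ?_
    have hc := neg_pi_mul_two_mul_add_one_neg n
    rw [norm_of_nonpos (log_one_sub_exp_mul_neg hc (hε.trans_le ht)).le,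
      norm_of_nonpos (log_one_sub_exp_mul_neg hc hε).le, neg_le_neg_iff]
    exact monotoneOn_log_one_sub_exp_mul hc hε (hε.trans_le ht) ht
  exact fun x hx => ((hloc (x / 2) (half_pos hx)).continuousAt
    (Ici_mem_nhds (half_lt_self hx))).continuousWithinAt

lemma strictAntiOn_fTwo : StrictAntiOn fTwo (Ioi 0) := by
  intro a ha b hb hab
  have := mul_le_mul_of_nonneg_left (monotoneOn_fTwoSeries ha hb hab.le) (one_div_pos.2 pi_pos).le
  rw [fTwo_eq_sub_fTwoSeries, fTwo_eq_sub_fTwoSeries]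
  linarith

lemma continuousOn_fTwo : ContinuousOn fTwo (Ioi 0) :=
  (by fun_prop : Continuous fun τ : ℝ => -τ / 24).continuousOn.sub
    (continuousOn_const.mul continuousOn_fTwoSeries)

lemma tendsto_fTwo_nhdsGT_zero : Tendsto fTwo (𝓝[>] 0) atTop := by
  have hq : Tendsto (fun τ : ℝ => 1 - exp (-π * τ)) (𝓝[>] 0) (𝓝[>] 0) := by
    refine tendsto_nhdsWithin_iff.2 ⟨?_, eventually_mem_nhdsWithin.mono fun τ hτ => ?_⟩
    · exact ((by fun_prop : Continuous fun τ : ℝ => 1 - exp (-π * τ)).tendsto' 0 0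
        (by simp)).mono_left nhdsWithin_le_nhds
    · exact sub_pos.2 (exp_lt_one_iff.2 (mul_neg_of_neg_of_pos (neg_neg_of_pos pi_pos) hτ))
  have hlin : Tendsto (fun τ : ℝ => -τ / 24) (𝓝[>] 0) (𝓝 0) :=
    ((by fun_prop : Continuous fun τ : ℝ => -τ / 24).tendsto' 0 0 (by simp)).mono_left
      nhdsWithin_le_nhds
  have hlower := hlin.add_atTop <|
    (tendsto_log_nhdsGT_zero.comp hq).const_mul_atBot_of_neg (neg_neg_of_pos (one_div_pos.2 pi_pos))
  refine tendsto_atTop_mono' _ (eventually_mem_nhdsWithin.mono fun τ hτ => ?_) hlower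
  have := mul_le_mul_of_nonneg_left (fTwoSeries_le_log hτ) (one_div_pos.2 pi_pos).le
  simp only [Function.comp_apply, fTwo_eq_sub_fTwoSeries]
  linarith

lemma tendsto_fTwo_atTop : Tendsto fTwo atTop atBot := by
  have hupper : Tendsto (fun τ : ℝ => -τ / 24 - 1 / π * fTwoSeries 1) atTop atBot :=
    tendsto_atBot_add_const_right _ _ (tendsto_neg_atTop_atBot.atBot_div_const (by norm_num))
  refine tendsto_atBot_mono' _ ((eventually_ge_atTop 1).mono fun τ hτ => ?_) hupper
  have := mul_le_mul_of_nonneg_left (monotoneOn_fTwoSeries (mem_Ioi.2 one_pos)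
    (mem_Ioi.2 (one_pos.trans_le hτ)) hτ) (one_div_pos.2 pi_pos).le
  rw [fTwo_eq_sub_fTwoSeries]
  linarith

theorem fTwo_props :
    StrictAntiOn fTwo (Set.Ioi (0 : ℝ)) ∧
    Filter.Tendsto fTwo (nhdsWithin 0 (Set.Ioi 0)) Filter.atTop ∧
    Filter.Tendsto fTwo Filter.atTop Filter.atBot ∧
    (∃! τ₀ : ℝ, 0 < τ₀ ∧ fTwo τ₀ = 0) :=
  ⟨strictAntiOn_fTwo, tendsto_fTwo_nhdsGT_zero, tendsto_fTwo_atTop,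
    strictAntiOn_fTwo.existsUnique_eq_of_tendsto 0 continuousOn_fTwo tendsto_fTwo_nhdsGT_zero
      tendsto_fTwo_atTop⟩
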